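/- arXiv:1503.04193 — 8 statements merged into one kernel-verified Lean document; each statement's English description precedes it below -/
import Mathlib

section
/- The canonical neighbourhood function for MILL is well-defined: if the sets {Γ : Γ ⊢ A derivable} and {Γ : Γ ⊢ B derivable} are equal, then for every multiset Γ, Γ ⊢ □A is derivable iff Γ ⊢ □B is derivable. -/
/-- Formulas of modal intuitionistic linear logic (MILL): atoms, 1, ⊗, &, ⊸, □. -/
inductive Fm : Type where
  | atom : ℕ → Fm
  | one : Fm
  | tensor : Fm → Fm → Fm
  | and : Fm → Fm → Fm
  | limp : Fm → Fm → Fm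
  | box : Fm → Fm

/-- Raw data of a modal Kripke resource frame/model. -/
structure KFrame where
  W : Type
  e : W
  mul : W → W → W
  ge : W → W → Prop
  N : W → Set (Set W)
  V : ℕ → Set W

/-- Truth at a world of a modal Kripke resource model. -/
def sat (F : KFrame) : F.W → Fm → Prop
  | m, .atom p => m ∈ F.V p
  | m, .one => F.ge m F.e
  | m, .tensor A B => ∃ m1 m2, F.ge m (F.mul m1 m2) ∧ sat F m1 A ∧ sat F m2 B
  | m, .and A B => sat F m A ∧ sat F m B
  | m, .limp A B => ∀ n, sat F n A → sat F (F.mul n m) B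
  | m, .box A => {n | sat F n A} ∈ F.N m

/-- The axioms making the data a modal Kripke resource model:
commutative monoid, preorder, bifunctoriality, hereditary valuation,
and heredity of the neighbourhood function. -/
def IsMKRM (F : KFrame) : Prop :=
  (∀ a b, F.mul a b = F.mul b a) ∧
  (∀ a b c, F.mul (F.mul a b) c = F.mul a (F.mul b c)) ∧
  (∀ a, F.mul a F.e = a) ∧
  (∀ a, F.ge a a) ∧
  (∀ a b c, F.ge a b → F.ge b c → F.ge a c) ∧
  (∀ m n m' n', F.ge m n → F.ge m' n' → F.ge (F.mul m m') (F.mul n n')) ∧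
  (∀ p m n, m ∈ F.V p → F.ge n m → n ∈ F.V p) ∧
  (∀ X m n, X ∈ F.N m → F.ge n m → X ∈ F.N n)

/-- The MILL sequent calculus over multisets of formulas. -/
inductive Der : Multiset Fm → Fm → Prop where
  | ax (A : Fm) : Der {A} A
  | cut {Γ Γ' : Multiset Fm} {A C : Fm} :
      Der (A ::ₘ Γ) C → Der Γ' A → Der (Γ + Γ') C
  | tensorL {Γ : Multiset Fm} {A B C : Fm} :
      Der (A ::ₘ B ::ₘ Γ) C → Der (Fm.tensor A B ::ₘ Γ) C
  | tensorR {Γ Γ' : Multiset Fm} {A B : Fm} :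
      Der Γ A → Der Γ' B → Der (Γ + Γ') (Fm.tensor A B)
  | limpL {Γ Γ' : Multiset Fm} {A B C : Fm} :
      Der Γ A → Der (B ::ₘ Γ') C → Der (Fm.limp A B ::ₘ (Γ + Γ')) C
  | limpR {Γ : Multiset Fm} {A B : Fm} :
      Der (A ::ₘ Γ) B → Der Γ (Fm.limp A B)
  | andL1 {Γ : Multiset Fm} {A B C : Fm} :
      Der (A ::ₘ Γ) C → Der (Fm.and A B ::ₘ Γ) C
  | andL2 {Γ : Multiset Fm} {A B C : Fm} :
      Der (B ::ₘ Γ) C → Der (Fm.and A B ::ₘ Γ) C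
  | andR {Γ : Multiset Fm} {A B : Fm} :
      Der Γ A → Der Γ B → Der Γ (Fm.and A B)
  | oneL {Γ : Multiset Fm} {C : Fm} :
      Der Γ C → Der (Fm.one ::ₘ Γ) C
  | oneR : Der 0 Fm.one
  | boxRe {A B : Fm} :
      Der {A} B → Der {B} A → Der {Fm.box A} (Fm.box B)

/-- Tensor of a list of formulas (empty list ↦ 1, singleton ↦ the formula). -/
def listStar : List Fm → Fm
  | [] => Fm.one
  | [A] => A
  | A :: l => Fm.tensor A (listStar l)

/-- Γ*: the tensor of all the formulas in the multiset Γ, with ∅* = 1. -/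
noncomputable def star (Γ : Multiset Fm) : Fm := listStar Γ.toList

/-- the canonical neighbourhood function is well-defined:
if |A|^c = |B|^c then Γ ⊢ □A is derivable iff Γ ⊢ □B is derivable. -/
theorem canonical_N_well_defined (A B : Fm)
    (h : {Γ : Multiset Fm | Der Γ A} = {Γ : Multiset Fm | Der Γ B}) :
    ∀ Γ : Multiset Fm, Der Γ (Fm.box A) ↔ Der Γ (Fm.box B) := by
  have hAB : Der {A} B := (Set.ext_iff.mp h {A}).mp (Der.ax A)
  have hBA : Der {B} A := (Set.ext_iff.mp h {B}).mpr (Der.ax B)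
  intro Γ
  constructor
  · intro hd
    have := Der.cut (Γ := 0) (Γ' := Γ) (Der.boxRe hAB hBA) hd
    simpa using this
  · intro hd
    have := Der.cut (Γ := 0) (Γ' := Γ) (Der.boxRe hBA hAB) hd
    simpa using this
end

section
/- The canonical neighbourhood function for MILL satisfies the heredity condition: if X ∈ N^c(Γ) and Δ ≥^c Γ (i.e., Δ ⊢ Γ* is derivable), then X ∈ N^c(Δ). -/
/-- |A|^c = the set of multisets deriving A. -/
def absC (A : Fm) : Set (Multiset Fm) := {Δ | Der Δ A}

/-- The canonical neighbourhood function. -/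
def NC (Γ : Multiset Fm) : Set (Set (Multiset Fm)) :=
  {X | ∃ A : Fm, X = absC A ∧ Der Γ (Fm.box A)}

lemma listStar_cons (A B : Fm) (l : List Fm) :
    listStar (A :: B :: l) = Fm.tensor A (listStar (B :: l)) := rfl

lemma der_listStar : ∀ (l : List Fm) (Γ : Multiset Fm) (C : Fm),
    Der ((l : Multiset Fm) + Γ) C → Der (listStar l ::ₘ Γ) C
  | [], Γ, C, h => by
      simpa [listStar] using Der.oneL (by simpa using h)
  | [A], Γ, C, h => by simpa [listStar] using h
  | A :: B :: l, Γ, C, h => by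
      rw [listStar_cons]
      apply Der.tensorL
      have h' : Der ((↑(B :: l) : Multiset Fm) + (A ::ₘ Γ)) C := by
        have e : ((↑(B :: l) : Multiset Fm) + (A ::ₘ Γ))
            = (↑(A :: B :: l) : Multiset Fm) + Γ := by
          simp only [← Multiset.cons_coe, Multiset.cons_add, Multiset.add_cons]
        rw [e]; exact h
      have := der_listStar (B :: l) (A ::ₘ Γ) C h'
      rwa [Multiset.cons_swap] at this

/-- the canonical neighbourhood function satisfies heredity:
if X ∈ N^c(Γ) and Δ ⊢ Γ* is derivable then X ∈ N^c(Δ). -/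
theorem canonical_N_hereditary (X : Set (Multiset Fm)) (Γ Δ : Multiset Fm)
    (hX : X ∈ NC Γ) (h : Der Δ (star Γ)) : X ∈ NC Δ := by
  obtain ⟨A, rfl, hd⟩ := hX
  refine ⟨A, rfl, ?_⟩
  have h1 : Der (star Γ ::ₘ 0) (Fm.box A) := by
    apply der_listStar
    simpa using hd
  have := Der.cut h1 h
  simpa using this
end

section
/- Truth Lemma for the canonical model of MILL: for every formula A and every finite multiset Γ, Γ ⊨_c A (truth in the canonical modal Kripke resource model) holds iff the sequent Γ ⊢ A is derivable in the MILL sequent calculus. -/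
/-- The canonical modal Kripke resource model: worlds are finite multisets of
formulas, ∘^c is multiset union, e^c = ∅, Γ ≥^c Δ iff Γ ⊢ Δ*,
V^c(p) = {Γ | Γ ⊢ p}, N^c(Γ) = {|A|^c | Γ ⊢ □A}. -/
noncomputable def canonical : KFrame where
  W := Multiset Fm
  e := 0
  mul := (· + ·)
  ge := fun Γ Δ => Der Γ (star Δ)
  N := fun Γ => {X | ∃ A : Fm, X = {Δ : Multiset Fm | Der Δ A} ∧ Der Γ (Fm.box A)}
  V := fun p => {Γ | Der Γ (Fm.atom p)}

lemma star_def (Γ : Multiset Fm) : star Γ = listStar Γ.toList := rfl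

lemma listStarL (l : List Fm) : ∀ (Γ : Multiset Fm) (C : Fm),
    Der ((l : Multiset Fm) + Γ) C → Der (listStar l ::ₘ Γ) C := by
  induction l with
  | nil => intro Γ C h; simpa [listStar] using Der.oneL (by simpa using h)
  | cons A l ih =>
    intro Γ C h
    cases l with
    | nil => simpa [listStar] using h
    | cons B l' =>
      have h1 : Der ((↑(B :: l') : Multiset Fm) + (A ::ₘ Γ)) C := by
        have he : ((↑(A :: B :: l') : Multiset Fm) + Γ)
            = (↑(B :: l') : Multiset Fm) + (A ::ₘ Γ) := by
          show (A ::ₘ (↑(B :: l') : Multiset Fm)) + Γ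
              = (↑(B :: l') : Multiset Fm) + (A ::ₘ Γ)
          rw [Multiset.cons_add, Multiset.add_cons]
        rwa [he] at h
      have h2 := ih (A ::ₘ Γ) C h1
      rw [Multiset.cons_swap] at h2
      exact Der.tensorL h2

lemma listStarR (l : List Fm) : Der (l : Multiset Fm) (listStar l) := by
  induction l with
  | nil => exact Der.oneR
  | cons A l ih =>
    cases l with
    | nil => exact Der.ax A
    | cons B l' =>
      have := Der.tensorR (Der.ax A) ih
      simpa [listStar, Multiset.singleton_add, Multiset.cons_coe] using this

lemma mstarR (Δ : Multiset Fm) : Der Δ (star Δ) := by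
  have := listStarR Δ.toList
  simpa [star_def] using this

lemma mstarL {Δ Γ : Multiset Fm} {C : Fm} (h : Der (Δ + Γ) C) :
    Der (star Δ ::ₘ Γ) C := by
  have := listStarL Δ.toList Γ C (by simpa using h)
  simpa [star_def] using this

lemma cutStar {Γ Δ : Multiset Fm} {C : Fm} (h1 : Der Γ (star Δ)) (h2 : Der Δ C) :
    Der Γ C := by
  have h3 : Der (star Δ ::ₘ 0) C := mstarL (by simpa using h2)
  simpa using Der.cut h3 h1

lemma cut1 {Γ : Multiset Fm} {A C : Fm} (h1 : Der (A ::ₘ 0) C) (h2 : Der Γ A) :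
    Der Γ C := by
  simpa using Der.cut h1 h2

lemma sat_atom (Γ : Multiset Fm) (p : ℕ) :
    sat canonical Γ (Fm.atom p) ↔ Der Γ (Fm.atom p) := Iff.rfl

lemma sat_one (Γ : Multiset Fm) :
    sat canonical Γ Fm.one ↔ Der Γ (star 0) := Iff.rfl

lemma sat_tensor (Γ : Multiset Fm) (A B : Fm) :
    sat canonical Γ (Fm.tensor A B) ↔
      ∃ Γ1 Γ2 : Multiset Fm, Der Γ (star (Γ1 + Γ2)) ∧
        sat canonical Γ1 A ∧ sat canonical Γ2 B := Iff.rfl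

lemma sat_and (Γ : Multiset Fm) (A B : Fm) :
    sat canonical Γ (Fm.and A B) ↔ sat canonical Γ A ∧ sat canonical Γ B := Iff.rfl

lemma sat_limp (Γ : Multiset Fm) (A B : Fm) :
    sat canonical Γ (Fm.limp A B) ↔
      ∀ Δ : Multiset Fm, sat canonical Δ A → sat canonical (Δ + Γ) B := Iff.rfl

lemma sat_box (Γ : Multiset Fm) (A : Fm) :
    sat canonical Γ (Fm.box A) ↔
      ∃ B : Fm, {Δ : Multiset Fm | sat canonical Δ A} = {Δ : Multiset Fm | Der Δ B}
        ∧ Der Γ (Fm.box B) := Iff.rfl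

/-- Truth Lemma: Γ ⊨_c A in the canonical model iff Γ ⊢ A is derivable. -/
theorem truth_lemma (A : Fm) (Γ : Multiset Fm) :
    sat canonical Γ A ↔ Der Γ A := by
  induction A generalizing Γ with
  | atom p => exact sat_atom Γ p
  | one =>
    rw [sat_one]
    have h0 : star (0 : Multiset Fm) = Fm.one := by simp [star_def, listStar]
    rw [h0]
  | tensor A B ihA ihB =>
    rw [sat_tensor]
    constructor
    · rintro ⟨Γ1, Γ2, hge, hA, hB⟩
      exact cutStar hge (Der.tensorR ((ihA Γ1).1 hA) ((ihB Γ2).1 hB))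
    · intro h
      refine ⟨{A}, {B}, ?_, (ihA {A}).2 (Der.ax A), (ihB {B}).2 (Der.ax B)⟩
      have hΔ : Der (A ::ₘ B ::ₘ 0) (star (({A} : Multiset Fm) + {B})) := by
        have := mstarR (({A} : Multiset Fm) + {B})
        simpa [Multiset.singleton_add] using this
      exact cut1 (Der.tensorL hΔ) h
  | and A B ihA ihB =>
    rw [sat_and]
    constructor
    · rintro ⟨hA, hB⟩
      exact Der.andR ((ihA Γ).1 hA) ((ihB Γ).1 hB)
    · intro h
      exact ⟨(ihA Γ).2 (cut1 (Der.andL1 (Der.ax A)) h),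
             (ihB Γ).2 (cut1 (Der.andL2 (Der.ax B)) h)⟩
  | limp A B ihA ihB =>
    rw [sat_limp]
    constructor
    · intro h
      have hd : Der (({A} : Multiset Fm) + Γ) B :=
        (ihB _).1 (h {A} ((ihA {A}).2 (Der.ax A)))
      exact Der.limpR (by simpa [Multiset.singleton_add] using hd)
    · intro h Δ hΔ
      have hΔ' : Der Δ A := (ihA Δ).1 hΔ
      have hl : Der (Fm.limp A B ::ₘ (Δ + 0)) B := Der.limpL hΔ' (Der.ax B)
      have hl' : Der (Fm.limp A B ::ₘ Δ) B := by simpa using hl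
      apply (ihB _).2
      have := Der.cut hl' h
      simpa [Multiset.singleton_add] using this
  | box A ihA =>
    rw [sat_box]
    constructor
    · rintro ⟨B, hEq, hDer⟩
      have hsets : {Δ : Multiset Fm | Der Δ A} = {Δ : Multiset Fm | Der Δ B} := by
        rw [← hEq]; ext Δ; exact (ihA Δ).symm
      have hAB : Der {A} B := by
        have : ({A} : Multiset Fm) ∈ {Δ : Multiset Fm | Der Δ B} := by
          rw [← hsets]; exact Der.ax A
        exact this
      have hBA : Der {B} A := by
        have : ({B} : Multiset Fm) ∈ {Δ : Multiset Fm | Der Δ A} := by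
          rw [hsets]; exact Der.ax B
        exact this
      have hbox : Der {Fm.box B} (Fm.box A) := Der.boxRe hBA hAB
      exact cut1 (by simpa using hbox) hDer
    · intro h
      refine ⟨A, ?_, h⟩
      ext Δ; exact ihA Δ
end

section
/- Soundness of the MILL sequent calculus: if the sequent Γ ⊢ A is derivable in the MILL sequent calculus, then in every modal Kripke resource model, e ⊨ Γ* ⊸ A. -/
/-!
Soundness is proved at an arbitrary world `m`: if `m` splits into resources satisfying the
formulas of `Γ`, then `m ⊨ A`. Each rule preserves this. Commutativity and associativity of
the resource monoid make the splitting condition invariant under permuting `Γ`, so it is well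
defined on multisets; heredity lets a leftover resource `≥ e` be discarded. The premises of
`□(re)` say that `A` and `B` have the same truth set, so `□A` and `□B` impose the same
neighbourhood condition.
-/

namespace IsMKRM

variable {F : KFrame}

theorem mul_comm (hF : IsMKRM F) (a b : F.W) : F.mul a b = F.mul b a := hF.1 a b

theorem mul_assoc (hF : IsMKRM F) (a b c : F.W) :
    F.mul (F.mul a b) c = F.mul a (F.mul b c) :=
  hF.2.1 a b c

theorem mul_e (hF : IsMKRM F) (a : F.W) : F.mul a F.e = a := hF.2.2.1 a

theorem e_mul (hF : IsMKRM F) (a : F.W) : F.mul F.e a = a := by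
  rw [hF.mul_comm, hF.mul_e]

theorem ge_refl (hF : IsMKRM F) (a : F.W) : F.ge a a := hF.2.2.2.1 a

theorem ge_trans (hF : IsMKRM F) {a b c : F.W} (hab : F.ge a b) (hbc : F.ge b c) : F.ge a c :=
  hF.2.2.2.2.1 a b c hab hbc

theorem mul_ge_mul (hF : IsMKRM F) {m n m' n' : F.W} (h : F.ge m n) (h' : F.ge m' n') :
    F.ge (F.mul m m') (F.mul n n') :=
  hF.2.2.2.2.2.1 m n m' n' h h'

theorem mem_V_of_ge (hF : IsMKRM F) {p : ℕ} {m n : F.W} (hm : m ∈ F.V p) (h : F.ge n m) :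
    n ∈ F.V p :=
  hF.2.2.2.2.2.2.1 p m n hm h

theorem mem_N_of_ge (hF : IsMKRM F) {X : Set F.W} {m n : F.W} (hm : X ∈ F.N m)
    (h : F.ge n m) : X ∈ F.N n :=
  hF.2.2.2.2.2.2.2 X m n hm h

theorem ge_mul_of_ge_left (hF : IsMKRM F) {m a a' b : F.W} (h : F.ge m (F.mul a b))
    (ha : F.ge a a') : F.ge m (F.mul a' b) :=
  hF.ge_trans h (hF.mul_ge_mul ha (hF.ge_refl b))

theorem ge_mul_of_ge_right (hF : IsMKRM F) {m a b b' : F.W} (h : F.ge m (F.mul a b))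
    (hb : F.ge b b') : F.ge m (F.mul a b') :=
  hF.ge_trans h (hF.mul_ge_mul (hF.ge_refl a) hb)

theorem ge_of_ge_mul_of_ge_e_right (hF : IsMKRM F) {m a b : F.W} (h : F.ge m (F.mul a b))
    (hb : F.ge b F.e) : F.ge m a := by
  simpa only [hF.mul_e] using hF.ge_mul_of_ge_right h hb

theorem ge_of_ge_mul_of_ge_e_left (hF : IsMKRM F) {m a b : F.W} (h : F.ge m (F.mul a b))
    (ha : F.ge a F.e) : F.ge m b := by
  simpa only [hF.e_mul] using hF.ge_mul_of_ge_left h ha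

theorem sat_of_ge (hF : IsMKRM F) {A : Fm} {m n : F.W} (h : sat F m A) (hnm : F.ge n m) :
    sat F n A := by
  induction A generalizing m n with
  | atom p => exact hF.mem_V_of_ge h hnm
  | one => exact hF.ge_trans hnm h
  | tensor A B _ _ =>
    obtain ⟨a, b, hab, hA, hB⟩ := h
    exact ⟨a, b, hF.ge_trans hnm hab, hA, hB⟩
  | and A B ihA ihB => exact ⟨ihA h.1 hnm, ihB h.2 hnm⟩
  | limp A B _ ihB => exact fun k hk => ihB (h k hk) (hF.mul_ge_mul (hF.ge_refl k) hnm)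
  | box A _ => exact hF.mem_N_of_ge h hnm

end IsMKRM

-- truth of `A₁ ⊗ (A₂ ⊗ ⋯ ⊗ (Aₙ ⊗ 1))`; `listStar` differs only by omitting the final `⊗ 1`
def SatList (F : KFrame) : F.W → List Fm → Prop
  | m, [] => F.ge m F.e
  | m, A :: l => ∃ a b, F.ge m (F.mul a b) ∧ sat F a A ∧ SatList F b l

def SatCtx (F : KFrame) (m : F.W) (Γ : Multiset Fm) : Prop := SatList F m Γ.toList

section SatCtx

variable {F : KFrame}

theorem SatList.of_ge (hF : IsMKRM F) {l : List Fm} {m n : F.W} (h : SatList F m l)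
    (hnm : F.ge n m) : SatList F n l := by
  cases l with
  | nil => exact hF.ge_trans hnm h
  | cons A l =>
    obtain ⟨a, b, hab, hA, hb⟩ := h
    exact ⟨a, b, hF.ge_trans hnm hab, hA, hb⟩

theorem SatList.perm (hF : IsMKRM F) {l l' : List Fm} (hp : l.Perm l') {m : F.W}
    (h : SatList F m l) : SatList F m l' := by
  induction hp generalizing m with
  | nil => exact h
  | cons A _ ih =>
    obtain ⟨a, b, hab, hA, hb⟩ := h
    exact ⟨a, b, hab, hA, ih hb⟩
  | swap A B l =>
    obtain ⟨a, b, hab, hB, c, d, hcd, hA, hd⟩ := h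
    refine ⟨c, F.mul a d, ?_, hA, a, d, hF.ge_refl _, hB, hd⟩
    have := hF.ge_mul_of_ge_right hab hcd
    rwa [← hF.mul_assoc, hF.mul_comm a c, hF.mul_assoc] at this
  | trans _ _ ih₁ ih₂ => exact ih₂ (ih₁ h)

theorem satList_append (hF : IsMKRM F) (l₁ l₂ : List Fm) (m : F.W) :
    SatList F m (l₁ ++ l₂) ↔
      ∃ a b, F.ge m (F.mul a b) ∧ SatList F a l₁ ∧ SatList F b l₂ := by
  induction l₁ generalizing m with
  | nil =>
    refine ⟨fun h => ⟨F.e, m, ?_, hF.ge_refl _, h⟩, fun ⟨a, b, hab, ha, hb⟩ => ?_⟩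
    · simpa only [hF.e_mul] using hF.ge_refl m
    · exact hb.of_ge hF (hF.ge_of_ge_mul_of_ge_e_left hab ha)
  | cons A l₁ ih =>
    constructor
    · rintro ⟨a, b, hab, hA, hb⟩
      obtain ⟨c, d, hcd, hc, hd⟩ := (ih b).mp hb
      refine ⟨F.mul a c, d, ?_, ⟨a, c, hF.ge_refl _, hA, hc⟩, hd⟩
      simpa only [hF.mul_assoc] using hF.ge_mul_of_ge_right hab hcd
    · rintro ⟨a, b, hab, ⟨c, d, hcd, hA, hd⟩, hb⟩
      refine ⟨c, F.mul d b, ?_, hA, (ih _).mpr ⟨d, b, hF.ge_refl _, hd, hb⟩⟩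
      simpa only [hF.mul_assoc] using hF.ge_mul_of_ge_left hab hcd

theorem sat_listStar_iff (hF : IsMKRM F) (l : List Fm) (m : F.W) :
    sat F m (listStar l) ↔ SatList F m l := by
  induction l generalizing m with
  | nil => rfl
  | cons A l ih =>
    cases l with
    | nil =>
      refine ⟨fun h => ⟨m, F.e, ?_, h, hF.ge_refl _⟩, fun ⟨a, b, hab, hA, hb⟩ => ?_⟩
      · simpa only [hF.mul_e] using hF.ge_refl m
      · exact hF.sat_of_ge hA (hF.ge_of_ge_mul_of_ge_e_right hab hb)
    | cons B l =>
      exact exists₂_congr fun a b => and_congr_right' (and_congr_right' (ih b))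

theorem satCtx_coe (hF : IsMKRM F) (l : List Fm) (m : F.W) :
    SatCtx F m (l : Multiset Fm) ↔ SatList F m l :=
  have hp : (l : Multiset Fm).toList.Perm l := Multiset.coe_eq_coe.mp (Multiset.coe_toList _)
  ⟨SatList.perm hF hp, SatList.perm hF hp.symm⟩

theorem satCtx_zero (m : F.W) : SatCtx F m 0 ↔ F.ge m F.e := by
  simp only [SatCtx, Multiset.toList_zero, SatList]

theorem satCtx_cons (hF : IsMKRM F) (A : Fm) (Γ : Multiset Fm) (m : F.W) :
    SatCtx F m (A ::ₘ Γ) ↔ ∃ a b, F.ge m (F.mul a b) ∧ sat F a A ∧ SatCtx F b Γ := by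
  rw [← Multiset.coe_toList Γ, Multiset.cons_coe, satCtx_coe hF]
  exact exists₂_congr fun a b => and_congr_right' (and_congr_right' (satCtx_coe hF _ b).symm)

theorem satCtx_add (hF : IsMKRM F) (Γ Γ' : Multiset Fm) (m : F.W) :
    SatCtx F m (Γ + Γ') ↔ ∃ a b, F.ge m (F.mul a b) ∧ SatCtx F a Γ ∧ SatCtx F b Γ' := by
  rw [← Multiset.coe_toList Γ, ← Multiset.coe_toList Γ', Multiset.coe_add, satCtx_coe hF,
    satList_append hF]
  simp only [satCtx_coe hF]

theorem satCtx_singleton (hF : IsMKRM F) (A : Fm) (m : F.W) : SatCtx F m {A} ↔ sat F m A := by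
  rw [← Multiset.coe_singleton, satCtx_coe hF, ← sat_listStar_iff hF]
  rfl

end SatCtx

theorem Der.sound {F : KFrame} (hF : IsMKRM F) {Γ : Multiset Fm} {A : Fm} (h : Der Γ A)
    {m : F.W} (hm : SatCtx F m Γ) : sat F m A := by
  induction h generalizing m with
  | ax A => exact (satCtx_singleton hF A m).mp hm
  | cut _ _ ih₁ ih₂ =>
    obtain ⟨a, b, hab, ha, hb⟩ := (satCtx_add hF _ _ m).mp hm
    exact ih₁ ((satCtx_cons hF _ _ m).mpr ⟨b, a, hF.mul_comm a b ▸ hab, ih₂ hb, ha⟩)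
  | tensorL _ ih =>
    obtain ⟨a, b, hab, ⟨c, d, hcd, hA, hB⟩, hb⟩ := (satCtx_cons hF _ _ m).mp hm
    refine ih ((satCtx_cons hF _ _ m).mpr ⟨c, F.mul d b, ?_, hA, ?_⟩)
    · simpa only [hF.mul_assoc] using hF.ge_mul_of_ge_left hab hcd
    · exact (satCtx_cons hF _ _ _).mpr ⟨d, b, hF.ge_refl _, hB, hb⟩
  | tensorR _ _ ih₁ ih₂ =>
    obtain ⟨a, b, hab, ha, hb⟩ := (satCtx_add hF _ _ m).mp hm
    exact ⟨a, b, hab, ih₁ ha, ih₂ hb⟩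
  | limpL _ _ ih₁ ih₂ =>
    obtain ⟨a, b, hab, hAB, hb⟩ := (satCtx_cons hF _ _ m).mp hm
    obtain ⟨c, d, hcd, hc, hd⟩ := (satCtx_add hF _ _ b).mp hb
    refine ih₂ ((satCtx_cons hF _ _ m).mpr ⟨F.mul c a, d, ?_, hAB c (ih₁ hc), hd⟩)
    have := hF.ge_mul_of_ge_right hab hcd
    rwa [← hF.mul_assoc, hF.mul_comm a c] at this
  | limpR _ ih => exact fun n hn => ih ((satCtx_cons hF _ _ _).mpr ⟨n, m, hF.ge_refl _, hn, hm⟩)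
  | andL1 _ ih =>
    obtain ⟨a, b, hab, hA, hb⟩ := (satCtx_cons hF _ _ m).mp hm
    exact ih ((satCtx_cons hF _ _ m).mpr ⟨a, b, hab, hA.1, hb⟩)
  | andL2 _ ih =>
    obtain ⟨a, b, hab, hB, hb⟩ := (satCtx_cons hF _ _ m).mp hm
    exact ih ((satCtx_cons hF _ _ m).mpr ⟨a, b, hab, hB.2, hb⟩)
  | andR _ _ ih₁ ih₂ => exact ⟨ih₁ hm, ih₂ hm⟩
  | oneL _ ih =>
    obtain ⟨a, b, hab, ha, hb⟩ := (satCtx_cons hF _ _ m).mp hm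
    exact ih (hb.of_ge hF (hF.ge_of_ge_mul_of_ge_e_left hab ha))
  | oneR => exact (satCtx_zero m).mp hm
  | @boxRe A B _ _ ih₁ ih₂ =>
    have hAB : {n | sat F n A} = {n | sat F n B} := Set.ext fun n =>
      ⟨fun hn => ih₁ ((satCtx_singleton hF A n).mpr hn),
        fun hn => ih₂ ((satCtx_singleton hF B n).mpr hn)⟩
    show {n | sat F n B} ∈ F.N m
    exact hAB ▸ (satCtx_singleton hF _ m).mp hm

/-- soundness of the MILL sequent calculus:
if Γ ⊢ A is derivable, then e ⊨ Γ* ⊸ A in every modal Kripke resource model. -/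
theorem soundness (Γ : Multiset Fm) (A : Fm) (h : Der Γ A) :
    ∀ F : KFrame, IsMKRM F → sat F F.e (Fm.limp (star Γ) A) := by
  intro F hF n hn
  rw [hF.mul_e]
  exact h.sound hF ((sat_listStar_iff hF _ n).mp hn)
end

section
/- The cut-reduction step for the modal rule preserves derivability and decreases cut rank: given derivations of B ⊢ C, C ⊢ B, C ⊢ D, and D ⊢ C in MILL, the sequent □B ⊢ □D is derivable without any cut on □C (using only cuts on C). -/
inductive DerCut (P : Fm → Prop) : Multiset Fm → Fm → Prop where
  | ax (A : Fm) : DerCut P {A} A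
  | cut {Γ Γ' : Multiset Fm} {A C : Fm} : P A →
      DerCut P (A ::ₘ Γ) C → DerCut P Γ' A → DerCut P (Γ + Γ') C
  | tensorL {Γ : Multiset Fm} {A B C : Fm} :
      DerCut P (A ::ₘ B ::ₘ Γ) C → DerCut P (Fm.tensor A B ::ₘ Γ) C
  | tensorR {Γ Γ' : Multiset Fm} {A B : Fm} :
      DerCut P Γ A → DerCut P Γ' B → DerCut P (Γ + Γ') (Fm.tensor A B)
  | limpL {Γ Γ' : Multiset Fm} {A B C : Fm} :
      DerCut P Γ A → DerCut P (B ::ₘ Γ') C → DerCut P (Fm.limp A B ::ₘ (Γ + Γ')) C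
  | limpR {Γ : Multiset Fm} {A B : Fm} :
      DerCut P (A ::ₘ Γ) B → DerCut P Γ (Fm.limp A B)
  | andL1 {Γ : Multiset Fm} {A B C : Fm} :
      DerCut P (A ::ₘ Γ) C → DerCut P (Fm.and A B ::ₘ Γ) C
  | andL2 {Γ : Multiset Fm} {A B C : Fm} :
      DerCut P (B ::ₘ Γ) C → DerCut P (Fm.and A B ::ₘ Γ) C
  | andR {Γ : Multiset Fm} {A B : Fm} :
      DerCut P Γ A → DerCut P Γ B → DerCut P Γ (Fm.and A B)
  | oneL {Γ : Multiset Fm} {C : Fm} :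
      DerCut P Γ C → DerCut P (Fm.one ::ₘ Γ) C
  | oneR : DerCut P 0 Fm.one
  | boxRe {A B : Fm} :
      DerCut P {A} B → DerCut P {B} A → DerCut P {Fm.box A} (Fm.box B)

theorem DerCut.mono {P Q : Fm → Prop} (hPQ : ∀ A, P A → Q A) {Γ : Multiset Fm} {C : Fm}
    (h : DerCut P Γ C) : DerCut Q Γ C := by
  induction h with
  | ax A => exact .ax A
  | cut hA _ _ ih1 ih2 => exact .cut (hPQ _ hA) ih1 ih2
  | tensorL _ ih => exact .tensorL ih
  | tensorR _ _ ih1 ih2 => exact .tensorR ih1 ih2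
  | limpL _ _ ih1 ih2 => exact .limpL ih1 ih2
  | limpR _ ih => exact .limpR ih
  | andL1 _ ih => exact .andL1 ih
  | andL2 _ ih => exact .andL2 ih
  | andR _ _ ih1 ih2 => exact .andR ih1 ih2
  | oneL _ ih => exact .oneL ih
  | oneR => exact .oneR
  | boxRe _ _ ih1 ih2 => exact .boxRe ih1 ih2

/-- the cut-reduction step for the modal rule:
given derivations of B ⊢ C, C ⊢ B, C ⊢ D and D ⊢ C (with cuts restricted to P),
the sequent □B ⊢ □D is derivable with no further cuts except cuts on C —
in particular with no cut on □C. -/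
theorem modal_cut_reduction (P : Fm → Prop) (B C D : Fm)
    (h1 : DerCut P {B} C) (h2 : DerCut P {C} B)
    (h3 : DerCut P {C} D) (h4 : DerCut P {D} C) :
    DerCut (fun A => P A ∨ A = C) {Fm.box B} (Fm.box D) := by
  have m : ∀ {Γ E}, DerCut P Γ E → DerCut (fun A => P A ∨ A = C) Γ E :=
    fun h => h.mono (fun _ hA => Or.inl hA)
  have hBD : DerCut (fun A => P A ∨ A = C) {B} D := by
    have := DerCut.cut (Γ := 0) (Γ' := {B}) (Or.inr rfl) (m h3) (m h1)
    simpa using this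
  have hDB : DerCut (fun A => P A ∨ A = C) {D} B := by
    have := DerCut.cut (Γ := 0) (Γ' := {D}) (Or.inr rfl) (m h2) (m h4)
    simpa using this
  exact .boxRe hBD hDB
end

section
/- In the partially commutative modal Kripke resource model semantics, the entropy principle is valid: for every model and worlds m, if m ⊨ A ⊗ B then m ⊨ A ⊙ B. -/
/-- Formulas of PCMILL: atoms, 1, ⊗, &, ⊸, ⊙, \, /, □. -/
inductive Fm2 : Type where
  | atom : ℕ → Fm2
  | one : Fm2
  | tensor : Fm2 → Fm2 → Fm2
  | and : Fm2 → Fm2 → Fm2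
  | limp : Fm2 → Fm2 → Fm2
  | odot : Fm2 → Fm2 → Fm2
  | lslash : Fm2 → Fm2 → Fm2   -- A \ B
  | rslash : Fm2 → Fm2 → Fm2   -- B / A
  | box : Fm2 → Fm2

/-- Raw data of a partially commutative modal Kripke resource model:
a commutative operation ∘ (`mul`) and a non-commutative one • (`smul`). -/
structure PCFrame where
  W : Type
  e : W
  mul : W → W → W
  smul : W → W → W
  ge : W → W → Prop
  N : W → Set (Set W)
  V : ℕ → Set W

/-- Truth in a partially commutative modal Kripke resource model. -/
def sat2 (F : PCFrame) : F.W → Fm2 → Prop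
  | m, .atom p => m ∈ F.V p
  | m, .one => F.ge m F.e
  | m, .tensor A B => ∃ m1 m2, F.ge m (F.mul m1 m2) ∧ sat2 F m1 A ∧ sat2 F m2 B
  | m, .and A B => sat2 F m A ∧ sat2 F m B
  | m, .limp A B => ∀ n, sat2 F n A → sat2 F (F.mul n m) B
  | m, .odot A B => ∃ m1 m2, F.ge m (F.smul m1 m2) ∧ sat2 F m1 A ∧ sat2 F m2 B
  | m, .lslash A B => ∀ n, sat2 F n A → sat2 F (F.smul n m) B
  | m, .rslash B A => ∀ n, sat2 F n A → sat2 F (F.smul m n) B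
  | m, .box A => {n | sat2 F n A} ∈ F.N m

/-- Axioms of partially commutative modal Kripke resource models. -/
def IsPCMKRM (F : PCFrame) : Prop :=
  (∀ a b, F.mul a b = F.mul b a) ∧
  (∀ a b c, F.mul (F.mul a b) c = F.mul a (F.mul b c)) ∧
  (∀ a, F.mul a F.e = a) ∧
  (∀ a b c, F.smul (F.smul a b) c = F.smul a (F.smul b c)) ∧
  (∀ a, F.smul a F.e = a) ∧
  (∀ a, F.smul F.e a = a) ∧
  (∀ a, F.ge a a) ∧
  (∀ a b c, F.ge a b → F.ge b c → F.ge a c) ∧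
  (∀ m n m' n', F.ge m n → F.ge m' n' → F.ge (F.mul m m') (F.mul n n')) ∧
  (∀ m n m' n', F.ge m n → F.ge m' n' → F.ge (F.smul m m') (F.smul n n')) ∧
  (∀ p m n, m ∈ F.V p → F.ge n m → n ∈ F.V p) ∧
  (∀ X m n, X ∈ F.N m → F.ge n m → X ∈ F.N n) ∧
  (∀ x y, F.ge (F.mul x y) (F.smul x y))

/-- the entropy principle is valid: if m ⊨ A ⊗ B then m ⊨ A ⊙ B. -/
theorem entropy_valid (F : PCFrame) (hF : IsPCMKRM F) (m : F.W) (A B : Fm2)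
    (h : sat2 F m (Fm2.tensor A B)) : sat2 F m (Fm2.odot A B) := by
  obtain ⟨m1, m2, hge, hA, hB⟩ := h
  exact ⟨m1, m2, hF.2.2.2.2.2.2.2.1 _ _ _ hge (hF.2.2.2.2.2.2.2.2.2.2.2.2 m1 m2), hA, hB⟩
end

section
/- The anti-necessitation rule (~nec) of RSBIAT is sound: in any modal Kripke resource model with agent neighbourhood functions N_a satisfying condition (2): if X ∈ N_a(w) and e ∈ X then w ∈ V(⊥), the following holds: if e ⊨ A in every model of the class, then in every model, for all x, x ⊨ E_a A implies x ⊨ ⊥ (i.e., e ⊨ E_a A ⊸ ⊥). -/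
/-- Formulas of RSBIAT over a set `α` of agents: atoms (atom 0 is the
designated atom ⊥), 1, ⊗, &, ⊸, and one agency modality E_a per agent. -/
inductive FmA (α : Type) : Type where
  | atom : ℕ → FmA α
  | one : FmA α
  | tensor : FmA α → FmA α → FmA α
  | and : FmA α → FmA α → FmA α
  | limp : FmA α → FmA α → FmA α
  | ea : α → FmA α → FmA α

/-- The designated contradiction atom ⊥. -/
def FmA.bot {α : Type} : FmA α := FmA.atom 0

/-- Raw data of a modal Kripke resource model with one neighbourhood
function per agent. -/
structure AFrame (α : Type) where
  W : Type
  e : W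
  mul : W → W → W
  ge : W → W → Prop
  N : α → W → Set (Set W)
  V : ℕ → Set W

/-- Truth in an agent modal Kripke resource model. -/
def satA {α : Type} (F : AFrame α) : F.W → FmA α → Prop
  | m, .atom p => m ∈ F.V p
  | m, .one => F.ge m F.e
  | m, .tensor A B => ∃ m1 m2, F.ge m (F.mul m1 m2) ∧ satA F m1 A ∧ satA F m2 B
  | m, .and A B => satA F m A ∧ satA F m B
  | m, .limp A B => ∀ n, satA F n A → satA F (F.mul n m) B
  | m, .ea a A => {n | satA F n A} ∈ F.N a m

/-- Axioms of modal Kripke resource models (agent-indexed neighbourhoods). -/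
def IsAMKRM {α : Type} (F : AFrame α) : Prop :=
  (∀ a b, F.mul a b = F.mul b a) ∧
  (∀ a b c, F.mul (F.mul a b) c = F.mul a (F.mul b c)) ∧
  (∀ a, F.mul a F.e = a) ∧
  (∀ a, F.ge a a) ∧
  (∀ a b c, F.ge a b → F.ge b c → F.ge a c) ∧
  (∀ m n m' n', F.ge m n → F.ge m' n' → F.ge (F.mul m m') (F.mul n n')) ∧
  (∀ p m n, m ∈ F.V p → F.ge n m → n ∈ F.V p) ∧
  (∀ (a : α) X m n, X ∈ F.N a m → F.ge n m → X ∈ F.N a n)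

/-- Condition (2): if X ∈ N_a(w) and e ∈ X then w ∈ V(⊥). -/
def CondNotaut {α : Type} (F : AFrame α) : Prop :=
  ∀ (a : α) (X : Set F.W) (w : F.W), X ∈ F.N a w → F.e ∈ X → w ∈ F.V 0

/-- soundness of the anti-necessitation rule (~nec):
if e ⊨ A in every model of the class, then in every model of the class,
every world satisfying E_a A satisfies ⊥ (i.e. e ⊨ E_a A ⊸ ⊥). -/
theorem antinec_sound {α : Type} (A : FmA α)
    (h : ∀ F : AFrame α, IsAMKRM F → CondNotaut F → satA F F.e A) :
    ∀ F : AFrame α, IsAMKRM F → CondNotaut F →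
      ∀ (a : α) (x : F.W), satA F x (FmA.ea a A) → satA F x FmA.bot := by
  intro F hM hC a x hx
  exact hC a _ x hx (h F hM hC)
end

section
/- The multiplicative action-combination rule E_a⊗ is sound: in any modal Kripke resource model with agent neighbourhood functions satisfying the condition (if X ∈ N_a(x) and Y ∈ N_a(y), then the upward closure of X ∘ Y belongs to N_a(x ∘ y)), if e ⊨ Γ* ⊸ E_a A and e ⊨ Δ* ⊸ E_a B, then e ⊨ (Γ* ⊗ Δ*) ⊸ E_a (A ⊗ B). -/
/-- Pointwise product of sets of worlds: X ∘ Y. -/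
def setMul {α : Type} (F : AFrame α) (X Y : Set F.W) : Set F.W :=
  {z | ∃ x ∈ X, ∃ y ∈ Y, z = F.mul x y}

/-- Upward closure X↑. -/
def upCl {α : Type} (F : AFrame α) (X : Set F.W) : Set F.W :=
  {y | ∃ x ∈ X, F.ge y x}

/-- Condition (4): X ∈ N_a(x) and Y ∈ N_a(y) imply (X ∘ Y)↑ ∈ N_a(x ∘ y). -/
def CondTensor {α : Type} (F : AFrame α) : Prop :=
  ∀ (a : α) (X Y : Set F.W) (x y : F.W),
    X ∈ F.N a x → Y ∈ F.N a y → upCl F (setMul F X Y) ∈ F.N a (F.mul x y)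

/-- soundness of the rule E_a⊗:
if e ⊨ Γ* ⊸ E_a A and e ⊨ Δ* ⊸ E_a B, then e ⊨ (Γ* ⊗ Δ*) ⊸ E_a (A ⊗ B). -/
theorem ea_tensor_sound {α : Type} (F : AFrame α)
    (hF : IsAMKRM F) (hT : CondTensor F) (a : α) (G D A B : FmA α)
    (h1 : satA F F.e (FmA.limp G (FmA.ea a A)))
    (h2 : satA F F.e (FmA.limp D (FmA.ea a B))) :
    satA F F.e (FmA.limp (FmA.tensor G D) (FmA.ea a (FmA.tensor A B))) := by
  obtain ⟨hcomm, hassoc, hunit, hrefl, htrans, hmono, hV, hN⟩ := hF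
  intro n hn
  obtain ⟨m1, m2, hge, hG, hD⟩ := hn
  have hA : {k | satA F k A} ∈ F.N a m1 := by
    have := h1 m1 hG; rwa [hunit] at this
  have hB : {k | satA F k B} ∈ F.N a m2 := by
    have := h2 m2 hD; rwa [hunit] at this
  have hAB := hT a _ _ _ _ hA hB
  have heq : upCl F (setMul F {k | satA F k A} {k | satA F k B})
      = {k | satA F k (FmA.tensor A B)} := by
    ext k
    constructor
    · rintro ⟨x, ⟨x1, hx1, x2, hx2, rfl⟩, hk⟩
      exact ⟨x1, x2, hk, hx1, hx2⟩
    · rintro ⟨x1, x2, hk, hx1, hx2⟩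
      exact ⟨F.mul x1 x2, ⟨x1, hx1, x2, hx2, rfl⟩, hk⟩
  rw [heq] at hAB
  have : {k | satA F k (FmA.tensor A B)} ∈ F.N a n := hN a _ _ _ hAB hge
  rwa [hunit]
end
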